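/- arXiv:2102.07826 — 3 statements merged into one kernel-verified Lean document; each statement's English description precedes it below -/
import Mathlib

section
/- Let 𝒰 be a probability distribution on ℝ^N and let 𝒟(u', u'') be an event (a measurable symmetric 'duel' relation on ℝ^N × ℝ^N) such that for every pair (u', u''), at least one of 𝒟(u', u'') or 𝒟(u'', u') holds. Define the skill s(u') = P_{u''∼𝒰}[𝒟(u'', u')] and S(q) = P_{u'∼𝒰}[s(u') ≤ q]. Then S(q) ≤ 2q for every q ∈ (0,1). -/
open MeasureTheory Set

/-- Let `𝒰` be a probability measure on `ℝ^N` and `D` a measurable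
duel relation such that for every pair at least one of `D u' u''` or `D u'' u'`
holds. With skill `s(u') = P_{u''∼𝒰}[D u'' u']` and
`S(q) = P_{u'∼𝒰}[s(u') ≤ q]`, we have `S(q) ≤ 2q` for every `q ∈ (0,1)`. -/
theorem skill_tail_bound (N : ℕ)
    (𝒰 : Measure (Fin N → ℝ)) [IsProbabilityMeasure 𝒰]
    (D : (Fin N → ℝ) → (Fin N → ℝ) → Prop)
    (hmeas : MeasurableSet {p : (Fin N → ℝ) × (Fin N → ℝ) | D p.1 p.2})
    (htotal : ∀ u' u'', D u' u'' ∨ D u'' u')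
    (s : (Fin N → ℝ) → ℝ)
    (hs : ∀ u', s u' = (𝒰 {u'' | D u'' u'}).toReal)
    (S : ℝ → ℝ)
    (hS : ∀ q, S q = (𝒰 {u' | s u' ≤ q}).toReal) :
    ∀ q ∈ Set.Ioo (0 : ℝ) 1, S q ≤ 2 * q := by
  intro q hq
  obtain ⟨hq0, hq1⟩ := hq
  set Dswap : Set ((Fin N → ℝ) × (Fin N → ℝ)) := {p | D p.2 p.1} with hDswap_def
  have hDswap : MeasurableSet Dswap := hmeas.preimage measurable_swap
  -- measurability of s
  have hsect : ∀ u', {u'' | D u'' u'} = Prod.mk u' ⁻¹' Dswap := by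
    intro u'; rfl
  have hs_meas : Measurable s := by
    have h1 : Measurable fun u' => 𝒰 (Prod.mk u' ⁻¹' Dswap) :=
      measurable_measure_prodMk_left hDswap
    have : s = fun u' => (𝒰 (Prod.mk u' ⁻¹' Dswap)).toReal := by
      funext u'; rw [hs u', hsect u']
    rw [this]
    exact h1.ennreal_toReal
  set A : Set (Fin N → ℝ) := {u' | s u' ≤ q} with hA_def
  have hA : MeasurableSet A := hs_meas measurableSet_Iic
  set P := 𝒰.prod 𝒰 with hP_def
  set C : Set ((Fin N → ℝ) × (Fin N → ℝ)) := (A ×ˢ (univ : Set (Fin N → ℝ))) ∩ Dswap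
    with hC_def
  have hC : MeasurableSet C := (hA.prod MeasurableSet.univ).inter hDswap
  -- bound P C ≤ ofReal q * 𝒰 A
  have hPC : P C ≤ ENNReal.ofReal q * 𝒰 A := by
    rw [hP_def, Measure.prod_apply hC]
    have hbound : ∀ u', 𝒰 (Prod.mk u' ⁻¹' C) ≤ A.indicator (fun _ => ENNReal.ofReal q) u' := by
      intro u'
      by_cases hu : u' ∈ A
      · have hsub : Prod.mk u' ⁻¹' C ⊆ Prod.mk u' ⁻¹' Dswap := fun x hx => hx.2
        have h1 : 𝒰 (Prod.mk u' ⁻¹' C) ≤ 𝒰 (Prod.mk u' ⁻¹' Dswap) := measure_mono hsub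
        have h2 : 𝒰 (Prod.mk u' ⁻¹' Dswap) = ENNReal.ofReal (s u') := by
          rw [← hsect u', hs u', ENNReal.ofReal_toReal (measure_ne_top 𝒰 _)]
        rw [indicator_of_mem hu]
        exact h1.trans (h2.le.trans (ENNReal.ofReal_le_ofReal hu))
      · have : Prod.mk u' ⁻¹' C = ∅ := by
          ext x; simp only [mem_preimage, hC_def, mem_inter_iff, mem_prod, mem_univ,
            and_true, mem_empty_iff_false, iff_false]
          exact fun h => hu h.1
        rw [this, measure_empty, indicator_of_notMem hu]
    calc ∫⁻ u', 𝒰 (Prod.mk u' ⁻¹' C) ∂𝒰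
        ≤ ∫⁻ u', A.indicator (fun _ => ENNReal.ofReal q) u' ∂𝒰 := lintegral_mono hbound
      _ = ENNReal.ofReal q * 𝒰 A := by
          rw [lintegral_indicator hA]; simp [mul_comm]
  -- swap
  have hswapC : P (Prod.swap ⁻¹' C) = P C := by
    have := Measure.prod_swap (μ := 𝒰) (ν := 𝒰)
    calc P (Prod.swap ⁻¹' C) = (P.map Prod.swap) C := (Measure.map_apply measurable_swap hC).symm
      _ = P C := by rw [hP_def, this]
  -- coverage
  have hcover : A ×ˢ A ⊆ C ∪ Prod.swap ⁻¹' C := by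
    rintro ⟨u', u''⟩ ⟨h1, h2⟩
    rcases htotal u' u'' with h | h
    · right
      exact ⟨⟨h2, mem_univ _⟩, h⟩
    · left
      exact ⟨⟨h1, mem_univ _⟩, h⟩
  have hkey : 𝒰 A * 𝒰 A ≤ 2 * ENNReal.ofReal q * 𝒰 A := by
    calc 𝒰 A * 𝒰 A = P (A ×ˢ A) := (Measure.prod_prod A A).symm
      _ ≤ P (C ∪ Prod.swap ⁻¹' C) := measure_mono hcover
      _ ≤ P C + P (Prod.swap ⁻¹' C) := measure_union_le _ _
      _ = 2 * P C := by rw [hswapC]; ring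
      _ ≤ 2 * (ENNReal.ofReal q * 𝒰 A) := by
          exact mul_le_mul_right hPC 2
      _ = 2 * ENNReal.ofReal q * 𝒰 A := by ring
  have hfin : 𝒰 A ≠ ⊤ := measure_ne_top 𝒰 A
  rw [hS q]
  by_cases hA0 : 𝒰 A = 0
  · rw [← hA_def, hA0]; simp; linarith
  · have hle : 𝒰 A ≤ 2 * ENNReal.ofReal q := by
      rw [← ENNReal.mul_le_mul_iff_left hA0 hfin]
      exact hkey
    have h2q : (2 * ENNReal.ofReal q).toReal = 2 * q := by
      rw [ENNReal.toReal_mul, ENNReal.toReal_ofReal hq0.le]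
      simp
    calc (𝒰 A).toReal ≤ (2 * ENNReal.ofReal q).toReal := by
          apply ENNReal.toReal_mono _ hle
          exact ENNReal.mul_ne_top (by simp) ENNReal.ofReal_ne_top
      _ = 2 * q := h2q
end

section
/- Let 𝒟 be a measurable relation on ℝ^N × ℝ^N such that for every pair at least one of 𝒟(u', u'') or 𝒟(u'', u') holds. Let u, u⁽¹⁾, …, u⁽ⱽ⁾ be i.i.d. draws from a distribution 𝒰 on ℝ^N. Then the probability that 𝒟(u⁽ᵛ⁾, u) fails for all v ∈ [V] is at most 2/(V+1). -/
/-! Call index `i` undefeated if no other draw beats it. By totality of the duel relation at most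
one index is undefeated, so these `V + 1` events are disjoint; since the draws are i.i.d., their
joint law is invariant under permuting indices, so all these events have the same probability.
Hence each has probability at most `1 / (V + 1)`, and the event in question is that index `0`
is undefeated. -/

open MeasureTheory ProbabilityTheory Set

theorem measurePreserving_comp_equiv {ι α : Type*} [Fintype ι] [MeasurableSpace α]
    (ν : Measure α) [SigmaFinite ν] (e : ι ≃ ι) :
    MeasurePreserving (fun g : ι → α => g ∘ e) (Measure.pi fun _ => ν)
      (Measure.pi fun _ => ν) := by
  convert measurePreserving_piCongrLeft (fun _ : ι => ν) e.symm
  ext g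
  simp [MeasurableEquiv.piCongrLeft, Equiv.piCongrLeft]

namespace Tournament

variable {ι α : Type*}

def undefeated (D : α → α → Prop) (i : ι) : Set (ι → α) :=
  {g | ∀ j, j ≠ i → ¬ D (g j) (g i)}

variable {D : α → α → Prop}

theorem measurableSet_undefeated [MeasurableSpace α] [Countable ι]
    (hD : MeasurableSet {p : α × α | D p.1 p.2}) (i : ι) :
    MeasurableSet (undefeated D i) := by
  have : undefeated D i = ⋂ j, ⋂ (_ : j ≠ i),
      ((fun g : ι → α => (g j, g i)) ⁻¹' {p | D p.1 p.2})ᶜ := by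
    ext g; simp [undefeated]
  rw [this]
  exact .iInter fun j => .iInter fun _ =>
    (((measurable_pi_apply j).prodMk (measurable_pi_apply i)) hD).compl

theorem pairwise_disjoint_undefeated (htotal : ∀ a b, D a b ∨ D b a) :
    Pairwise (Function.onFun Disjoint (undefeated D : ι → Set (ι → α))) := by
  intro i j hij
  refine Set.disjoint_left.2 fun g hi hj => ?_
  exact (htotal (g i) (g j)).elim (hj i hij) (hi j hij.symm)

theorem preimage_comp_undefeated (e : ι ≃ ι) (i : ι) :
    (fun g : ι → α => g ∘ e) ⁻¹' undefeated D i = undefeated D (e i) := by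
  ext g
  simp only [undefeated, mem_preimage, mem_ofPred_eq, Function.comp_apply]
  rw [e.forall_congr_left]
  simp [Equiv.symm_apply_eq]

theorem undefeated_zero_eq {n : ℕ} :
    undefeated D (0 : Fin (n + 1)) = {g | ∀ v : Fin n, ¬ D (g v.succ) (g 0)} := by
  ext g
  simp [undefeated, Fin.forall_fin_succ]

theorem measure_undefeated_le [Fintype ι] [MeasurableSpace α]
    (ν : Measure α) [IsProbabilityMeasure ν]
    (hD : MeasurableSet {p : α × α | D p.1 p.2}) (htotal : ∀ a b, D a b ∨ D b a) (i : ι) :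
    Measure.pi (fun _ => ν) (undefeated D i) ≤ (Fintype.card ι : ENNReal)⁻¹ := by
  classical
  set P := Measure.pi fun _ : ι => ν
  have heq : ∀ k, P (undefeated D k) = P (undefeated D i) := fun k => by
    rw [← (measurePreserving_comp_equiv ν (Equiv.swap i k)).measure_preimage
      (measurableSet_undefeated hD i).nullMeasurableSet, preimage_comp_undefeated,
      Equiv.swap_apply_left]
  have hsum : Fintype.card ι * P (undefeated D i) ≤ 1 := calc
    Fintype.card ι * P (undefeated D i) = ∑ k, P (undefeated D k) := by simp [heq]
    _ = P (⋃ k, undefeated D k) := by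
      rw [measure_iUnion (pairwise_disjoint_undefeated htotal) (measurableSet_undefeated hD),
        tsum_fintype]
    _ ≤ 1 := prob_le_one
  rwa [ENNReal.le_inv_iff_mul_le, mul_comm]

end Tournament

open Tournament in
/-- Let `D` be a measurable duel relation on `ℝ^N × ℝ^N` such that
for every pair at least one of `D u' u''` or `D u'' u'` holds, and let
`X 0, X 1, …, X V` be i.i.d. draws from a distribution on `ℝ^N` (with `X 0`
playing the role of `u` and `X v.succ` the role of `u⁽ᵛ⁾`). Then the
probability that `D (u⁽ᵛ⁾) u` fails for every `v ∈ [V]` is at most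
`2/(V+1)`. -/
theorem all_duels_fail_prob_bound (N V : ℕ)
    {Ω : Type*} [MeasurableSpace Ω] (μ : Measure Ω) [IsProbabilityMeasure μ]
    (D : (Fin N → ℝ) → (Fin N → ℝ) → Prop)
    (hmeas : MeasurableSet {p : (Fin N → ℝ) × (Fin N → ℝ) | D p.1 p.2})
    (htotal : ∀ u' u'', D u' u'' ∨ D u'' u')
    (X : Fin (V + 1) → Ω → Fin N → ℝ)
    (hindep : iIndepFun X μ)
    (hident : ∀ a b, IdentDistrib (X a) (X b) μ μ) :
    μ {ω | ∀ v : Fin V, ¬ D (X v.succ ω) (X 0 ω)} ≤ ENNReal.ofReal (2 / (V + 1)) := by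
  have hX : ∀ j, AEMeasurable (X j) μ := fun j => (hident j 0).aemeasurable_fst
  have hlaw : μ.map (fun ω j => X j ω) = Measure.pi fun _ => μ.map (X 0) := by
    rw [hindep.map_fun_eq_pi_map hX]
    simp_rw [fun j => (hident j 0).map_eq]
  have : IsProbabilityMeasure (μ.map (X 0)) := Measure.isProbabilityMeasure_map (hX 0)
  calc μ {ω | ∀ v : Fin V, ¬ D (X v.succ ω) (X 0 ω)}
      = μ.map (fun ω j => X j ω) (undefeated D 0) := by
        rw [Measure.map_apply_of_aemeasurable (aemeasurable_pi_lambda _ hX)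
          (measurableSet_undefeated hmeas 0), undefeated_zero_eq]
        rfl
    _ ≤ ((V + 1 : ℕ) : ENNReal)⁻¹ := by
        rw [hlaw]
        convert measure_undefeated_le (μ.map (X 0)) hmeas htotal (0 : Fin (V + 1))
        simp
    _ ≤ ENNReal.ofReal (2 / (V + 1)) := by
        rw [← ENNReal.ofReal_natCast, ← ENNReal.ofReal_inv_of_pos (by positivity)]
        refine ENNReal.ofReal_le_ofReal ?_
        rw [div_eq_mul_inv]
        push_cast
        linarith [inv_pos.2 (Nat.cast_add_one_pos (α := ℝ) V)]
end

section
/- Under the model of Lemma 4.1: let α ∈ ℝ^N with null set H₀ = {i : α_i ≤ 0} of size N₀, let u, u⁽¹⁾, …, u⁽ⱽ⁾ be i.i.d. from a distribution 𝒰 on ℝ^N, and let α̂⁽ᵛ⁾ = (α + u) − u⁽ᵛ⁾. Then with probability at least 1 − 2/(V+1) there exists v ∈ [V] such that |{i : α̂⁽ᵛ⁾_i ≤ 0}| ≥ N₀/2. -/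
/-!
Call sample `j` a strict winner if every other sample `k` has fewer than `N₀ / 2` null
coordinates with `u⁽ᵏ⁾_i ≥ u⁽ʲ⁾_i`. For two samples these two counts add up to at least `N₀`, so
at most one sample is a strict winner; by exchangeability all samples are strict winners with the
same probability, hence `u = u⁽⁰⁾` is one with probability at most `1 / (V + 1)`. Otherwise some
bootstrap sample `u⁽ᵛ⁾` has at least `N₀ / 2` null coordinates with `u⁽ᵛ⁾_i ≥ u_i`, and at each
of them `α̂⁽ᵛ⁾_i ≤ 0`.
-/

open MeasureTheory ProbabilityTheory Finset Function
open scoped ENNReal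

theorem measure_le_inv_card_of_pairwise_disjoint {α ι : Type*} [MeasurableSpace α] [Fintype ι]
    (μ : Measure α) [IsProbabilityMeasure μ] {S : ι → Set α} (hS : ∀ i, MeasurableSet (S i))
    (hdisj : Pairwise (Disjoint on S)) {j : ι} (heq : ∀ i, μ (S i) = μ (S j)) :
    μ (S j) ≤ (Fintype.card ι : ℝ≥0∞)⁻¹ := by
  rw [ENNReal.le_inv_iff_mul_le]
  calc μ (S j) * Fintype.card ι = ∑ i, μ (S i) := by
        simp only [heq, sum_const, card_univ, nsmul_eq_mul, mul_comm]
    _ = μ (⋃ i, S i) := by rw [measure_iUnion hdisj hS, tsum_fintype]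
    _ ≤ 1 := prob_le_one

theorem measurePreserving_comp_perm {ι E : Type*} [Fintype ι] [MeasurableSpace E]
    (ν : Measure E) [SigmaFinite ν] (σ : Equiv.Perm ι) :
    MeasurePreserving (fun x : ι → E => x ∘ σ) (Measure.pi fun _ => ν) (Measure.pi fun _ => ν) := by
  convert measurePreserving_arrowCongr' (fun _ => ν) (fun _ => ν) σ.symm
    (MeasurableEquiv.refl E) fun _ => .id ν using 1
  ext x k
  simp [MeasurableEquiv.arrowCongr', Equiv.arrowCongr']

section StrictWinner

variable {ι E : Type*} (R : E → E → Prop)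

def strictWinnerSet (j : ι) : Set (ι → E) := {x | ∀ k ≠ j, ¬ R (x k) (x j)}

variable {R}

theorem pairwise_disjoint_strictWinnerSet (htotal : ∀ x y, R x y ∨ R y x) :
    Pairwise (Disjoint on (strictWinnerSet R : ι → Set (ι → E))) := fun j j' hjj' =>
  Set.disjoint_left.2 fun x hx hx' =>
    (htotal (x j) (x j')).elim (hx' j hjj') (hx j' hjj'.symm)

theorem measurableSet_strictWinnerSet [MeasurableSpace E] [Countable ι]
    (hR : MeasurableSet {p : E × E | R p.1 p.2}) (j : ι) :
    MeasurableSet (strictWinnerSet R j) := by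
  simp only [strictWinnerSet, Set.ofPred_forall]
  refine .iInter fun k => .iInter fun _ => .compl ?_
  exact (measurable_pi_apply k |>.prodMk (measurable_pi_apply j) :
    Measurable fun x : ι → E => (x k, x j)) hR

theorem preimage_comp_perm_strictWinnerSet (σ : Equiv.Perm ι) (j : ι) :
    (fun x : ι → E => x ∘ σ) ⁻¹' strictWinnerSet R j = strictWinnerSet R (σ j) := by
  ext x
  simp only [strictWinnerSet, Set.mem_preimage, Set.mem_ofPred_eq, comp_apply]
  conv_rhs => rw [← σ.forall_congr_right]
  simp only [ne_eq, σ.injective.eq_iff]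

theorem measure_pi_strictWinnerSet_le [MeasurableSpace E] [Fintype ι] (ν : Measure E)
    [IsProbabilityMeasure ν] (hR : MeasurableSet {p : E × E | R p.1 p.2})
    (htotal : ∀ x y, R x y ∨ R y x) (j : ι) :
    Measure.pi (fun _ : ι => ν) (strictWinnerSet R j) ≤ (Fintype.card ι : ℝ≥0∞)⁻¹ := by
  classical
  refine measure_le_inv_card_of_pairwise_disjoint _ (measurableSet_strictWinnerSet hR)
    (pairwise_disjoint_strictWinnerSet htotal) fun i => ?_
  rw [← (measurePreserving_comp_perm ν (Equiv.swap i j)).measure_preimage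
    (measurableSet_strictWinnerSet hR j).nullMeasurableSet, preimage_comp_perm_strictWinnerSet,
    Equiv.swap_apply_right]

theorem measure_strictWinnerSet_le [MeasurableSpace E] [Fintype ι] {Ω : Type*} [MeasurableSpace Ω]
    {μ : Measure Ω} [IsProbabilityMeasure μ] {X : ι → Ω → E} (hindep : iIndepFun X μ)
    (hident : ∀ i k, IdentDistrib (X i) (X k) μ μ) (hR : MeasurableSet {p : E × E | R p.1 p.2})
    (htotal : ∀ x y, R x y ∨ R y x) (j : ι) :
    μ ((fun ω i => X i ω) ⁻¹' strictWinnerSet R j) ≤ (Fintype.card ι : ℝ≥0∞)⁻¹ := by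
  have hX i : AEMeasurable (X i) μ := (hident i i).aemeasurable_fst
  have hlaw : μ.map (fun ω i => X i ω) = Measure.pi fun _ => μ.map (X j) := by
    rw [hindep.map_fun_eq_pi_map hX]
    exact congrArg Measure.pi (funext fun i => (hident i j).map_eq)
  have : IsProbabilityMeasure (μ.map (X j)) := Measure.isProbabilityMeasure_map (hX j)
  rw [← Measure.map_apply_of_aemeasurable (aemeasurable_pi_lambda _ hX)
    (measurableSet_strictWinnerSet hR j), hlaw]
  exact measure_pi_strictWinnerSet_le _ hR htotal j

end StrictWinner

section NullDuel

variable {κ : Type*} [Fintype κ]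

/-- The paper's `m(x, y) = |{i ∈ H₀ : x_i ≥ y_i}|`, with `H₀ = {i : α_i ≤ 0}`. -/
noncomputable def nullDuelCount (α x y : κ → ℝ) : ℕ := #{i | α i ≤ 0 ∧ y i ≤ x i}

theorem card_nonpos_le_nullDuelCount_add (α x y : κ → ℝ) :
    #{i | α i ≤ 0} ≤ nullDuelCount α x y + nullDuelCount α y x := by
  classical
  refine (card_le_card fun i hi => ?_).trans (card_union_le _ _)
  simp only [mem_filter, mem_union, mem_univ, true_and] at hi ⊢
  exact (le_total (y i) (x i)).imp (⟨hi, ·⟩) (⟨hi, ·⟩)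

theorem nullDuelCount_le_card_nonpos (α u u' : κ → ℝ) :
    nullDuelCount α u' u ≤ #{i | α i + u i - u' i ≤ 0} := by
  refine card_le_card fun i hi => ?_
  simp only [mem_filter, mem_univ, true_and] at hi ⊢
  linarith [hi.1, hi.2]

theorem measurable_nullDuelCount (α : κ → ℝ) :
    Measurable fun p : (κ → ℝ) × (κ → ℝ) => nullDuelCount α p.1 p.2 := by
  classical
  simp only [nullDuelCount, card_filter]
  refine Finset.measurable_sum _ fun i _ => Measurable.ite ?_ measurable_const measurable_const
  exact (MeasurableSet.const _).inter <| measurableSet_le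
    ((measurable_pi_apply i).comp measurable_snd) ((measurable_pi_apply i).comp measurable_fst)

end NullDuel

theorem ofReal_one_sub_two_div_le_one_sub_inv (n : ℕ) :
    ENNReal.ofReal (1 - 2 / (n + 1)) ≤ 1 - ((n : ℝ≥0∞) + 1)⁻¹ := by
  rw [ENNReal.ofReal_le_iff_le_toReal (by simp), ENNReal.toReal_sub_of_le (by simp) (by simp),
    ENNReal.toReal_inv, ENNReal.toReal_one, ENNReal.toReal_add (by simp) (by simp),
    ENNReal.toReal_natCast, ENNReal.toReal_one, inv_eq_one_div]
  gcongr
  norm_num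

/-- Lemma 4.1, one-sided case: Let `α ∈ ℝ^N` with null set
`H₀ = {i : α_i ≤ 0}` of size `N₀`, let `u = X 0` and bootstrap samples
`u⁽ᵛ⁾ = X v.succ` be i.i.d. from `𝒰`, and set `α̂⁽ᵛ⁾ = (α + u) − u⁽ᵛ⁾`.
Then with probability at least `1 − 2/(V+1)` some `v ∈ [V]` satisfies
`|{i : α̂⁽ᵛ⁾_i ≤ 0}| ≥ N₀/2`. -/
theorem exists_sample_with_many_nulls (N V : ℕ)
    {Ω : Type*} [MeasurableSpace Ω] (μ : Measure Ω) [IsProbabilityMeasure μ]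
    (α : Fin N → ℝ)
    (X : Fin (V + 1) → Ω → Fin N → ℝ)
    (hindep : iIndepFun X μ)
    (hident : ∀ a b, IdentDistrib (X a) (X b) μ μ) :
    ENNReal.ofReal (1 - 2 / (V + 1)) ≤
      μ {ω | ∃ v : Fin V,
        (((univ : Finset (Fin N)).filter fun i => α i ≤ 0).card : ℝ) / 2 ≤
          ((univ : Finset (Fin N)).filter fun i =>
            α i + X 0 ω i - X v.succ ω i ≤ 0).card} := by
  set N₀ := #{i | α i ≤ 0}
  let R x y := N₀ ≤ 2 * nullDuelCount α x y
  have htotal x y : R x y ∨ R y x := by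
    have := card_nonpos_le_nullDuelCount_add α x y
    omega
  have hR : MeasurableSet {p : (Fin N → ℝ) × (Fin N → ℝ) | R p.1 p.2} :=
    measurable_nullDuelCount α (MeasurableSet.of_discrete (s := {n | N₀ ≤ 2 * n}))
  set B := (fun ω i => X i ω) ⁻¹' strictWinnerSet R 0
  have hB : μ B ≤ ((V : ℝ≥0∞) + 1)⁻¹ := by
    simpa using measure_strictWinnerSet_le hindep hident hR htotal 0
  refine le_trans ?_ (measure_mono (μ := μ) (s := Bᶜ) fun ω hω => ?_)
  · calc ENNReal.ofReal (1 - 2 / (V + 1)) ≤ 1 - ((V : ℝ≥0∞) + 1)⁻¹ :=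
          ofReal_one_sub_two_div_le_one_sub_inv V
      _ ≤ 1 - μ B := tsub_le_tsub_left hB 1
      _ ≤ μ Bᶜ := tsub_le_iff_left.2 (measure_univ (μ := μ) ▸ measure_univ_le_add_compl B)
  simp only [B, strictWinnerSet, Set.mem_compl_iff, Set.mem_preimage, Set.mem_ofPred_eq, not_forall,
    not_not] at hω
  obtain ⟨k, hk0, hwin⟩ := hω
  obtain ⟨v, rfl⟩ := Fin.eq_succ_of_ne_zero hk0
  refine ⟨v, (div_le_iff₀' two_pos).2 ?_⟩
  have := nullDuelCount_le_card_nonpos α (X 0 ω) (X v.succ ω)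
  exact_mod_cast (show N₀ ≤ 2 * #{i | α i + X 0 ω i - X v.succ ω i ≤ 0} by omega)
end
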